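/- Let F : X → Y be a branched function with transfer operator Φ, and suppose the degree counted with multiplicity D := sup_{y ∈ Y} ∑_{x ∈ F⁻¹(y)} ind_F(x) is finite. Then for every ψ ∈ C₀(X) the function Φ(|ψ|²) is finite everywhere and belongs to C₀(Y) (so C₂(X) = C₀(X)), and ‖ψ‖_∞² ≤ ‖Φ(|ψ|²)‖_∞ ≤ D·‖ψ‖_∞². -/

import Mathlib

open Filter Topology Set

/-- `F` admits a system of inverse branches centered at `x`, relative to the index
function `ind`. -/
def BranchedAt {X Y : Type*} [TopologicalSpace X] [TopologicalSpace Y]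
    (F : X → Y) (ind : X → ℕ) (x : X) : Prop :=
  ∃ (U : Set X) (V : Set Y) (g : Fin (ind x) → Y → X),
    IsOpen U ∧ x ∈ U ∧ IsOpen V ∧ F x ∈ V ∧
    (∀ i, ∀ v ∈ V, g i v ∈ U) ∧
    (∀ i, ∀ v ∈ V, F (g i v) = v) ∧
    (∀ i, g i (F x) = x) ∧
    (∀ i, ContinuousWithinAt (g i) V (F x)) ∧
    (U = ⋃ i, g i '' V) ∧
    (∀ u ∈ U, ind u = Nat.card {i : Fin (ind x) // u ∈ g i '' V})

/-- `F` is a branched function with index function `ind`. -/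
def IsBranched {X Y : Type*} [TopologicalSpace X] [TopologicalSpace Y]
    (F : X → Y) (ind : X → ℕ) : Prop :=
  Continuous F ∧ (∀ x, 0 < ind x) ∧ ∀ x, BranchedAt F ind x

/-- The transfer operator applied to `|f|²`:
`Φ(|f|²)(y) = ∑_{x ∈ F⁻¹(y)} ind_F(x)·|f(x)|²`. -/
noncomputable def transferSq {X Y : Type*} (F : X → Y) (ind : X → ℕ) (f : X → ℂ) (y : Y) : ℝ :=
  ∑' x : F ⁻¹' {y}, (ind x.1 : ℝ) * ‖f x.1‖ ^ 2

/-!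
Since every index is at least `1` and the indices over a fibre sum to at most `D`, every fibre
is finite, and `Φ(|ψ|²)` lies between `|ψ(x)|²` (at `y = F x`) and `D‖ψ‖²_∞`.

For continuity at `y₀`, take pairwise disjoint charts around the finitely many points of
`F⁻¹(y₀)` and let `S` be their union. Near `y₀` the part of `Φ(φ)(y)` coming from `S` is
`∑ φ(g(y))` over the local inverse branches `g`, which is continuous at `y₀`. The remaining
fibre points avoid `S`. Given a compact `K`, the image `F(K \ S)` is compact and does not
contain `y₀`, so for `y` near `y₀` these points also lie outside `K`. The remainder is
therefore at most `D · sup_{X \ K} |φ|`. The same bound applied to `F(K)` shows that `Φ(φ)`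
vanishes at infinity.
-/

section Transfer

variable {X Y : Type*}

/-- The transfer operator `Φ` of `F`, on real functions. -/
noncomputable def transfer (F : X → Y) (ind : X → ℕ) (φ : X → ℝ) (y : Y) : ℝ :=
  ∑' x : F ⁻¹' {y}, (ind x.1 : ℝ) * φ x.1

lemma transferSq_eq_transfer (F : X → Y) (ind : X → ℕ) (ψ : X → ℂ) :
    transferSq F ind ψ = transfer F ind fun x => ‖ψ x‖ ^ 2 :=
  rfl

def DegreeLE (F : X → Y) (ind : X → ℕ) (D : ℝ) : Prop :=
  ∀ y : Y, Summable (fun x : F ⁻¹' {y} => (ind x.1 : ℝ)) ∧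
    (∑' x : F ⁻¹' {y}, (ind x.1 : ℝ)) ≤ D

variable {F : X → Y} {ind : X → ℕ} {D c : ℝ} {φ χ : X → ℝ} {y : Y}

lemma norm_natCast_mul_le {n : ℕ} {a b : ℝ} (h : |a| ≤ b) : ‖(n : ℝ) * a‖ ≤ n * b := by
  rw [norm_mul, Real.norm_natCast, Real.norm_eq_abs]
  exact mul_le_mul_of_nonneg_left h (Nat.cast_nonneg n)

lemma summable_ind_mul_of_abs_le (hs : Summable fun x : F ⁻¹' {y} => (ind x.1 : ℝ))
    (hφ : ∀ x, F x = y → |φ x| ≤ c) :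
    Summable fun x : F ⁻¹' {y} => (ind x.1 : ℝ) * φ x.1 :=
  (hs.mul_right c).of_norm_bounded fun x => norm_natCast_mul_le (hφ x.1 x.2)

lemma DegreeLE.abs_transfer_le (hdeg : DegreeLE F ind D) (hc : 0 ≤ c)
    (hφ : ∀ x, F x = y → |φ x| ≤ c) : |transfer F ind φ y| ≤ D * c :=
  calc |transfer F ind φ y| = ‖transfer F ind φ y‖ := (Real.norm_eq_abs _).symm
    _ ≤ ∑' x : F ⁻¹' {y}, (ind x.1 : ℝ) * c :=
        tsum_of_norm_bounded ((hdeg y).1.mul_right c).hasSum fun x =>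
          norm_natCast_mul_le (hφ x.1 x.2)
    _ = (∑' x : F ⁻¹' {y}, (ind x.1 : ℝ)) * c := (hdeg y).1.tsum_mul_right c
    _ ≤ D * c := mul_le_mul_of_nonneg_right (hdeg y).2 hc

lemma ind_mul_le_transfer (x : X)
    (hs : Summable fun x' : F ⁻¹' {F x} => (ind x'.1 : ℝ) * φ x'.1)
    (hφ : ∀ x', 0 ≤ φ x') : ind x * φ x ≤ transfer F ind φ (F x) :=
  hs.le_tsum ⟨x, rfl⟩ fun x' _ => mul_nonneg (Nat.cast_nonneg _) (hφ x')

lemma finite_fiber_of_summable (hind : ∀ x, 0 < ind x)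
    (hs : Summable fun x : F ⁻¹' {y} => (ind x.1 : ℝ)) : (F ⁻¹' {y}).Finite := by
  refine finite_coe_iff.1 (Finite.of_summable_const one_pos
    (hs.of_nonneg_of_le (fun _ => zero_le_one) fun x => ?_))
  exact_mod_cast hind x.1

lemma transfer_eq_sum (h : (F ⁻¹' {y}).Finite) (φ : X → ℝ) :
    transfer F ind φ y = ∑ x ∈ h.toFinset, (ind x : ℝ) * φ x := by
  rw [← Finset.tsum_subtype]
  exact tsum_congr_set_coe (fun x => (ind x : ℝ) * φ x) h.coe_toFinset.symm

lemma transfer_add (h : (F ⁻¹' {y}).Finite) :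
    transfer F ind (φ + χ) y = transfer F ind φ y + transfer F ind χ y := by
  simp only [transfer_eq_sum h, Pi.add_apply, mul_add, Finset.sum_add_distrib]

lemma transfer_finset_sum {ι : Type*} (h : (F ⁻¹' {y}).Finite) (s : Finset ι)
    (f : ι → X → ℝ) :
    transfer F ind (fun x => ∑ i ∈ s, f i x) y = ∑ i ∈ s, transfer F ind (f i) y := by
  simp only [transfer_eq_sum h, Finset.mul_sum]
  exact Finset.sum_comm

lemma transfer_eq_zero (hφ : ∀ x, F x = y → φ x = 0) : transfer F ind φ y = 0 :=
  (tsum_congr fun x => by rw [hφ x.1 x.2, mul_zero]).trans tsum_zero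

lemma transfer_indicator_eq_sum {ι : Type*} [Fintype ι] {U : Set X} {p : ι → X}
    (h : (F ⁻¹' {y}).Finite) (hpF : ∀ i, F (p i) = y) (hpU : ∀ i, p i ∈ U)
    (hmult : ∀ u ∈ U, F u = y → ind u = Nat.card {i // p i = u}) :
    transfer F ind (U.indicator φ) y = ∑ i, φ (p i) := by
  classical
  have hp : ∀ i ∈ Finset.univ, p i ∈ {u ∈ h.toFinset | u ∈ U} := fun i _ =>
    Finset.mem_filter.2 ⟨h.mem_toFinset.2 (hpF i), hpU i⟩
  rw [transfer_eq_sum h, ← Finset.sum_fiberwise_of_maps_to hp]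
  simp only [indicator_apply, mul_ite, mul_zero, ← Finset.sum_filter]
  refine Finset.sum_congr rfl fun u hu => ?_
  obtain ⟨huF, huU⟩ := Finset.mem_filter.1 hu
  rw [Finset.sum_congr rfl fun i hi => congrArg φ (Finset.mem_filter.1 hi).2, Finset.sum_const,
    nsmul_eq_mul, hmult u huU (h.mem_toFinset.1 huF), Nat.card_eq_fintype_card,
    Fintype.card_subtype]

lemma DegreeLE.tendsto_transfer_zero {l : Filter Y} (hdeg : DegreeLE F ind D)
    (h : ∀ c > 0, ∃ K : Set X, (∀ x ∉ K, |φ x| ≤ c) ∧ (F '' K)ᶜ ∈ l) :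
    Tendsto (transfer F ind φ) l (𝓝 0) := by
  refine Metric.tendsto_nhds.2 fun ε hε => ?_
  have hc : 0 < ε / (|D| + 1) := by positivity
  obtain ⟨K, hKφ, hK⟩ := h _ hc
  filter_upwards [hK] with y hy
  rw [Real.dist_0_eq_abs]
  calc |transfer F ind φ y| ≤ D * (ε / (|D| + 1)) :=
        hdeg.abs_transfer_le hc.le fun x hx => hKφ x fun hxK => hy ⟨x, hxK, hx⟩
    _ ≤ |D| * (ε / (|D| + 1)) := mul_le_mul_of_nonneg_right (le_abs_self D) hc.le
    _ < (|D| + 1) * (ε / (|D| + 1)) := by gcongr; linarith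
    _ = ε := mul_div_cancel₀ ε (by positivity)

lemma exists_isCompact_abs_le_of_tendsto_cocompact [TopologicalSpace X]
    (hφ : Tendsto φ (cocompact X) (𝓝 0)) (hc : 0 < c) :
    ∃ K : Set X, IsCompact K ∧ ∀ x ∉ K, |φ x| ≤ c := by
  simpa [Metric.mem_closedBall, Real.dist_0_eq_abs] using
    (hasBasis_cocompact.tendsto_iff Metric.nhds_basis_closedBall).1 hφ c hc

variable [TopologicalSpace X] [TopologicalSpace Y]

lemma DegreeLE.tendsto_transfer_cocompact (hdeg : DegreeLE F ind D) (hF : Continuous F)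
    (hφ : Tendsto φ (cocompact X) (𝓝 0)) :
    Tendsto (transfer F ind φ) (cocompact Y) (𝓝 0) :=
  hdeg.tendsto_transfer_zero fun _ hc =>
    let ⟨K, hK, hKφ⟩ := exists_isCompact_abs_le_of_tendsto_cocompact hφ hc
    ⟨K, hKφ, (hK.image hF).compl_mem_cocompact⟩

lemma DegreeLE.tendsto_transfer_indicator_compl [T2Space Y] {S : Set X} {y₀ : Y}
    (hdeg : DegreeLE F ind D) (hF : Continuous F) (hS : IsOpen S) (hSfib : F ⁻¹' {y₀} ⊆ S)
    (hφ : Tendsto φ (cocompact X) (𝓝 0)) :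
    Tendsto (transfer F ind (Sᶜ.indicator φ)) (𝓝 y₀) (𝓝 0) := by
  refine hdeg.tendsto_transfer_zero fun c hc => ?_
  obtain ⟨K, hK, hKφ⟩ := exists_isCompact_abs_le_of_tendsto_cocompact hφ hc
  refine ⟨K \ S, fun x hx => ?_, ((hK.diff hS).image hF).isClosed.isOpen_compl.mem_nhds ?_⟩
  · by_cases hxS : x ∈ S
    · simpa [hxS] using hc.le
    · rw [indicator_of_mem (s := Sᶜ) hxS]
      exact hKφ x fun hxK => hx ⟨hxK, hxS⟩
  · rintro ⟨x, ⟨-, hxS⟩, hx⟩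
    exact hxS (hSfib hx)

lemma IsBranched.exists_isOpen_continuousAt_transfer_indicator [T2Space X]
    (hF : IsBranched F ind) (hfin : ∀ y, (F ⁻¹' {y}).Finite) (y₀ : Y) :
    ∃ S : Set X, IsOpen S ∧ F ⁻¹' {y₀} ⊆ S ∧
      ∀ φ : X → ℝ, Continuous φ →
        ContinuousAt (transfer F ind (S.indicator φ)) y₀ := by
  classical
  choose U V g hUo hxU hVo hFxV hgU hFg hgFx hgc _ hcard using hF.2.2
  obtain ⟨W, hW, hWd⟩ := (hfin y₀).t2_separation
  set s := (hfin y₀).toFinset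
  have hs : ∀ {x}, x ∈ s ↔ F x = y₀ := (hfin y₀).mem_toFinset
  have hOd : (s : Set X).PairwiseDisjoint fun x => U x ∩ W x :=
    (hWd.subset (by simp [s])).mono fun _ => inter_subset_right
  refine ⟨⋃ x ∈ s, U x ∩ W x, isOpen_biUnion fun x _ => (hUo x).inter (hW x).2,
    fun x hx => mem_biUnion (hs.2 hx) ⟨hxU x, (hW x).1⟩, fun φ hφ => ?_⟩
  have hg : ∀ x ∈ s, ∀ i, ContinuousAt (g x i) y₀ := fun x hx i => by
    have := (hgc x i).continuousAt ((hVo x).mem_nhds (hFxV x))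
    rwa [hs.1 hx] at this
  have hnear : ∀ᶠ y in 𝓝 y₀, ∀ x ∈ s, y ∈ V x ∧ ∀ i, g x i y ∈ W x := by
    refine (Filter.eventually_all_finset s).2 fun x hx => ?_
    have hV : V x ∈ 𝓝 y₀ := hs.1 hx ▸ (hVo x).mem_nhds (hFxV x)
    refine Filter.Eventually.and hV (eventually_all.2 fun i => (hg x hx i).preimage_mem_nhds ?_)
    exact (hW x).2.mem_nhds (by rw [← hs.1 hx, hgFx]; exact (hW x).1)
  refine ContinuousAt.congr_of_eventuallyEq (f := fun y => ∑ x ∈ s, ∑ i, φ (g x i y))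
    (tendsto_finsetSum s fun x hx => tendsto_finsetSum _ fun i _ =>
      (hφ.continuousAt.comp (hg x hx i))) ?_
  filter_upwards [hnear] with y hy
  rw [Finset.indicator_biUnion s _ hOd, transfer_finset_sum (hfin y)]
  refine Finset.sum_congr rfl fun x hx => transfer_indicator_eq_sum (hfin y)
    (fun i => hFg x i y (hy x hx).1) (fun i => mem_inter (hgU x i y (hy x hx).1) ((hy x hx).2 i))
    fun u hu huy => ?_
  refine (hcard x u hu.1).trans (Nat.card_congr (Equiv.subtypeEquivRight fun i =>
    ⟨?_, fun h => ⟨y, (hy x hx).1, h⟩⟩))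
  rintro ⟨v, hv, rfl⟩
  rw [hFg x i v hv] at huy
  rw [huy]

theorem IsBranched.continuous_transfer [T2Space X] [T2Space Y] (hF : IsBranched F ind)
    (hdeg : DegreeLE F ind D) (hφ : Continuous φ) (hφ0 : Tendsto φ (cocompact X) (𝓝 0)) :
    Continuous (transfer F ind φ) := by
  have hfin : ∀ y, (F ⁻¹' {y}).Finite := fun y => finite_fiber_of_summable hF.2.1 (hdeg y).1
  refine continuous_iff_continuousAt.2 fun y₀ => ?_
  obtain ⟨S, hSo, hSfib, hS⟩ := hF.exists_isOpen_continuousAt_transfer_indicator hfin y₀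
  have hsplit : transfer F ind φ =
      transfer F ind (S.indicator φ) + transfer F ind (Sᶜ.indicator φ) :=
    funext fun y => by rw [Pi.add_apply, ← transfer_add (hfin y), S.indicator_self_add_compl]
  have hrest : ContinuousAt (transfer F ind (Sᶜ.indicator φ)) y₀ := by
    rw [ContinuousAt, transfer_eq_zero fun x hx => indicator_of_notMem (not_not.2 (hSfib hx)) _]
    exact hdeg.tendsto_transfer_indicator_compl hF.1 hSo hSfib hφ0
  rw [hsplit]
  exact (hS φ hφ).add hrest

end Transfer

theorem c2_eq_c0_of_finite_degree_general {X Y : Type*}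
    [TopologicalSpace X] [T2Space X]
    [TopologicalSpace Y] [T2Space Y]
    (F : X → Y) (ind : X → ℕ) (hF : IsBranched F ind)
    (D : ℝ)
    (hD : ∀ y : Y, Summable (fun x : F ⁻¹' {y} => (ind x.1 : ℝ)) ∧
      (∑' x : F ⁻¹' {y}, (ind x.1 : ℝ)) ≤ D) :
    ∀ ψ : X → ℂ, Continuous ψ → Tendsto ψ (cocompact X) (nhds 0) →
      (∀ y : Y, Summable fun x : F ⁻¹' {y} => (ind x.1 : ℝ) * ‖ψ x.1‖ ^ 2) ∧
      Continuous (transferSq F ind ψ) ∧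
      Tendsto (transferSq F ind ψ) (cocompact Y) (nhds 0) ∧
      (∀ x : X, ‖ψ x‖ ^ 2 ≤ ⨆ y : Y, transferSq F ind ψ y) ∧
      (∀ y : Y, transferSq F ind ψ y ≤ D * (⨆ x : X, ‖ψ x‖) ^ 2) := by
  intro ψ hψ hψ0
  set M := ⨆ x, ‖ψ x‖
  set φ : X → ℝ := fun x => ‖ψ x‖ ^ 2
  rw [transferSq_eq_transfer]
  have hdeg : DegreeLE F ind D := hD
  have hφM : ∀ x, |φ x| ≤ M ^ 2 := fun x => by
    have hle : ‖ψ x‖ ≤ M := by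
      let f : ZeroAtInftyContinuousMap X ℂ := ⟨⟨ψ, hψ⟩, hψ0⟩
      exact (f.toBCF.norm_coe_le_norm x).trans_eq f.toBCF.norm_eq_iSup_norm
    exact (abs_of_nonneg (sq_nonneg _)).trans_le (pow_le_pow_left₀ (norm_nonneg _) hle 2)
  have hsum : ∀ y : Y, Summable fun x : F ⁻¹' {y} => (ind x.1 : ℝ) * φ x.1 :=
    fun y => summable_ind_mul_of_abs_le (hD y).1 fun x _ => hφM x
  have hbound : ∀ y, transfer F ind φ y ≤ D * M ^ 2 :=
    fun y => (le_abs_self _).trans (hdeg.abs_transfer_le (sq_nonneg M) fun x _ => hφM x)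
  have hφ0 : Tendsto φ (cocompact X) (𝓝 0) := by simpa using hψ0.norm.pow 2
  refine ⟨hsum, hF.continuous_transfer hdeg (by fun_prop) hφ0,
    hdeg.tendsto_transfer_cocompact hF.1 hφ0, fun x => ?_, hbound⟩
  calc ‖ψ x‖ ^ 2 ≤ ind x * φ x :=
        le_mul_of_one_le_left (sq_nonneg _) (by exact_mod_cast hF.2.1 x)
    _ ≤ transfer F ind φ (F x) := ind_mul_le_transfer x (hsum (F x)) fun _ => sq_nonneg _
    _ ≤ ⨆ y, transfer F ind φ y := le_ciSup ⟨_, forall_mem_range.2 hbound⟩ (F x)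

/-- **Finite degree: `C₂(X) = C₀(X)` with equivalent norms.** If the degree counted
with multiplicity `D = sup_y ∑_{x ∈ F⁻¹(y)} ind_F(x)` of a branched function
`F : X → Y` is finite (i.e. each fiber sum of indices converges and is bounded by
`D`), then for every `ψ ∈ C₀(X)` the function `Φ(|ψ|²)` is finite everywhere and
belongs to `C₀(Y)`, and `‖ψ‖_∞² ≤ ‖Φ(|ψ|²)‖_∞ ≤ D·‖ψ‖_∞²`. -/
theorem c2_eq_c0_of_finite_degree {X Y : Type*}
    [TopologicalSpace X] [T2Space X] [LocallyCompactSpace X]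
    [TopologicalSpace Y] [T2Space Y] [LocallyCompactSpace Y]
    (F : X → Y) (ind : X → ℕ) (hF : IsBranched F ind)
    (D : ℝ)
    (hD : ∀ y : Y, Summable (fun x : F ⁻¹' {y} => (ind x.1 : ℝ)) ∧
      (∑' x : F ⁻¹' {y}, (ind x.1 : ℝ)) ≤ D) :
    ∀ ψ : X → ℂ, Continuous ψ → Tendsto ψ (cocompact X) (nhds 0) →
      (∀ y : Y, Summable fun x : F ⁻¹' {y} => (ind x.1 : ℝ) * ‖ψ x.1‖ ^ 2) ∧
      Continuous (transferSq F ind ψ) ∧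
      Tendsto (transferSq F ind ψ) (cocompact Y) (nhds 0) ∧
      (∀ x : X, ‖ψ x‖ ^ 2 ≤ ⨆ y : Y, transferSq F ind ψ y) ∧
      (∀ y : Y, transferSq F ind ψ y ≤ D * (⨆ x : X, ‖ψ x‖) ^ 2) :=
  c2_eq_c0_of_finite_degree_general F ind hF D hD
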